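/- arXiv:math/0608069 — 3 statements merged into one kernel-verified Lean document; each statement's English description precedes it below -/
import Mathlib

section
/- Let Γ be a full-rank lattice in ℝ^m and let G be a finite group of linear isometries of ℝ^m with g(Γ) = Γ for every g ∈ G; let W̃ denote the group of affine transformations of ℝ^m of the form x ↦ g x + γ with g ∈ G and γ ∈ Γ. If x, y ∈ ℝ^m lie in different W̃-orbits (that is, y ≠ g x + γ for all g ∈ G and γ ∈ Γ), then there exists a C^∞-smooth function f : ℝ^m → ℝ satisfying f(g z + γ) = f(z) for all z ∈ ℝ^m, g ∈ G, γ ∈ Γ, and such that f(x) ≠ f(y). In other words, the smooth W̃-invariant functions on ℝ^m separate the W̃-orbits. -/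
open scoped Real

/-- The smooth functions invariant under the affine group `W̃` generated by a finite group
`G` of linear isometries preserving a full-rank lattice `Γ` and the translations by `Γ`
separate the `W̃`-orbits in `ℝ^m`. -/
theorem smooth_invariant_functions_separate_affine_orbits
    (m : ℕ) (Γ : AddSubgroup (EuclideanSpace ℝ (Fin m)))
    (hdisc : ∃ ε > 0, ∀ γ ∈ Γ, γ ≠ 0 → ε ≤ ‖γ‖)
    (hspan : Submodule.span ℝ (Γ : Set (EuclideanSpace ℝ (Fin m))) = ⊤)
    (G : Subgroup (EuclideanSpace ℝ (Fin m) ≃ₗᵢ[ℝ] EuclideanSpace ℝ (Fin m)))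
    (hGfin : Finite G)
    (hGΓ : ∀ g ∈ G, ∀ γ ∈ Γ, g γ ∈ Γ)
    (x y : EuclideanSpace ℝ (Fin m))
    (hxy : ∀ g ∈ G, ∀ γ ∈ Γ, g x + γ ≠ y) :
    ∃ f : EuclideanSpace ℝ (Fin m) → ℝ, ContDiff ℝ (⊤ : ℕ∞) f ∧
      (∀ z : EuclideanSpace ℝ (Fin m), ∀ g ∈ G, ∀ γ ∈ Γ, f (g z + γ) = f z) ∧
      f x ≠ f y := by
  classical
  set L : Submodule ℤ (EuclideanSpace ℝ (Fin m)) := AddSubgroup.toIntSubmodule Γ with hLdef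
  -- `Γ` is discrete
  obtain ⟨ε, hε, hsep⟩ := hdisc
  letI : DiscreteTopology L := by
    rw [discreteTopology_iff_isOpen_singleton_zero]
    have hset : ({0} : Set L) = (Subtype.val) ⁻¹' (Metric.ball (0 : (EuclideanSpace ℝ (Fin m))) ε) := by
      ext γ
      simp only [Set.mem_singleton_iff, Set.mem_preimage, Metric.mem_ball, dist_zero_right]
      constructor
      · rintro rfl; simpa using hε
      · intro hlt
        by_contra hne
        have hγΓ : (γ : (EuclideanSpace ℝ (Fin m))) ∈ Γ := γ.2
        have : ε ≤ ‖(γ : (EuclideanSpace ℝ (Fin m)))‖ := hsep _ hγΓ (by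
          intro h0
          apply hne
          exact Subtype.ext h0)
        exact absurd hlt (not_lt.2 this)
    rw [hset]
    exact Metric.isOpen_ball.preimage continuous_subtype_val
  letI : IsZLattice ℝ L := ⟨by
    have : (L : Set (EuclideanSpace ℝ (Fin m))) = (Γ : Set (EuclideanSpace ℝ (Fin m))) := rfl
    rw [this, hspan]⟩
  letI : Module.Free ℤ L := ZLattice.module_free ℝ L
  letI : Module.Finite ℤ L := ZLattice.module_finite ℝ L
  set ι := Module.Free.ChooseBasisIndex ℤ L with hι
  set b0 : Module.Basis ι ℤ L := Module.Free.chooseBasis ℤ L with hb0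
  set b : Module.Basis ι ℝ (EuclideanSpace ℝ (Fin m)) := b0.ofZLatticeBasis ℝ L with hb
  -- integrality of coordinates of lattice points
  have hrepr : ∀ γ ∈ Γ, ∀ i : ι, ∃ n : ℤ, b.repr γ i = (n : ℝ) := by
    intro γ hγ i
    refine ⟨b0.repr ⟨γ, hγ⟩ i, ?_⟩
    simpa using b0.ofZLatticeBasis_repr_apply ℝ L ⟨γ, hγ⟩ i
  -- converse: integral coordinates imply membership in `Γ`
  have hint : ∀ v : (EuclideanSpace ℝ (Fin m)), (∀ i : ι, ∃ n : ℤ, b.repr v i = (n : ℝ)) → v ∈ Γ := by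
    intro v hv
    choose n hn using hv
    have hvmem : v ∈ Submodule.span ℤ (Set.range b) := by
      have hveq : v = ∑ i, (n i) • b i := by
        conv_lhs => rw [← b.sum_repr v]
        refine Finset.sum_congr rfl fun i _ => ?_
        rw [hn i, Int.cast_smul_eq_zsmul]
      rw [hveq]
      exact Submodule.sum_mem _ fun i _ =>
        Submodule.smul_mem _ _ (Submodule.subset_span ⟨i, rfl⟩)
    rw [b0.ofZLatticeBasis_span ℝ] at hvmem
    exact hvmem
  -- the "Fourier" map
  set Φ : (EuclideanSpace ℝ (Fin m)) → ι → ℂ := fun z i => Complex.exp (((b.repr z i : ℝ) : ℂ) * (2 * π * Complex.I))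
    with hΦ
  have hΦper : ∀ z : (EuclideanSpace ℝ (Fin m)), ∀ γ ∈ Γ, Φ (z + γ) = Φ z := by
    intro z γ hγ
    funext i
    obtain ⟨k, hk⟩ := hrepr γ hγ i
    simp only [hΦ, map_add, Finsupp.add_apply, hk]
    push_cast
    rw [add_mul, Complex.exp_add, Complex.exp_int_mul_two_pi_mul_I, mul_one]
  have hΦinj : ∀ z w : (EuclideanSpace ℝ (Fin m)), Φ z = Φ w → z - w ∈ Γ := by
    intro z w h
    apply hint
    intro i
    have h1 := congrFun h i
    rw [hΦ, Complex.exp_eq_exp_iff_exists_int] at h1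
    obtain ⟨k, hk⟩ := h1
    refine ⟨k, ?_⟩
    have h2 : ((b.repr z i : ℝ) : ℂ) * (2 * π * Complex.I)
        = (((b.repr w i : ℝ) : ℂ) + (k : ℂ)) * (2 * π * Complex.I) := by
      rw [hk]; ring
    have h3 : ((b.repr z i : ℝ) : ℂ) = ((b.repr w i : ℝ) : ℂ) + (k : ℂ) :=
      mul_right_cancel₀ Complex.two_pi_I_ne_zero h2
    have h4 : b.repr z i = b.repr w i + (k : ℝ) := by exact_mod_cast h3
    rw [map_sub, Finsupp.sub_apply, h4]
    ring
  -- smoothness of coordinates of Φ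
  have hΦcd : ∀ i : ι, ContDiff ℝ (⊤ : ℕ∞) fun z : (EuclideanSpace ℝ (Fin m)) => Φ z i := by
    intro i
    have h1 : ContDiff ℝ (⊤ : ℕ∞) fun z : (EuclideanSpace ℝ (Fin m)) => b.repr z i := by
      have := (LinearMap.toContinuousLinearMap (b.coord i)).contDiff (n := ((⊤ : ℕ∞) : WithTop ℕ∞))
      convert this using 1
      funext z
      exact (Module.Basis.coord_apply b i z).symm
    have h2 : ContDiff ℝ (⊤ : ℕ∞) fun z : (EuclideanSpace ℝ (Fin m)) => ((b.repr z i : ℝ) : ℂ) * (2 * π * Complex.I) :=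
      (Complex.ofRealCLM.contDiff.comp h1).mul contDiff_const
    exact (Complex.contDiff_exp).comp h2
  -- the quadratic separation function
  set Q : (ι → ℂ) → (ι → ℂ) → ℝ := fun v w =>
    ∑ i, (((v i).re - (w i).re) ^ 2 + ((v i).im - (w i).im) ^ 2) with hQ
  have hQnonneg : ∀ v w, 0 ≤ Q v w := fun v w =>
    Finset.sum_nonneg fun i _ => add_nonneg (sq_nonneg _) (sq_nonneg _)
  have hQself : ∀ v, Q v v = 0 := by intro v; simp [hQ]
  have hQpos : ∀ v w, v ≠ w → 0 < Q v w := by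
    intro v w hvw
    obtain ⟨i, hi⟩ := Function.ne_iff.mp hvw
    refine Finset.sum_pos' (fun j _ => add_nonneg (sq_nonneg _) (sq_nonneg _))
      ⟨i, Finset.mem_univ i, ?_⟩
    have : (v i).re ≠ (w i).re ∨ (v i).im ≠ (w i).im := by
      by_contra hc
      push_neg at hc
      exact hi (Complex.ext hc.1 hc.2)
    rcases this with h | h
    · exact add_pos_of_pos_of_nonneg (sq_pos_iff.mpr (sub_ne_zero.mpr h)) (sq_nonneg _)
    · exact add_pos_of_nonneg_of_pos (sq_nonneg _) (sq_pos_iff.mpr (sub_ne_zero.mpr h))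
  letI : Fintype G := Fintype.ofFinite G
  -- the separating invariant function
  refine ⟨fun z => ∑ g : G, ∏ g' : G,
      Q (Φ ((g : (EuclideanSpace ℝ (Fin m)) ≃ₗᵢ[ℝ] (EuclideanSpace ℝ (Fin m))) z)) (Φ ((g' : (EuclideanSpace ℝ (Fin m)) ≃ₗᵢ[ℝ] (EuclideanSpace ℝ (Fin m))) y)), ?_, ?_, ?_⟩
  · -- smoothness
    apply ContDiff.sum
    intro g _
    apply contDiff_prod
    intro g' _
    rw [hQ]
    apply ContDiff.sum
    intro i _
    have hgz : ContDiff ℝ (⊤ : ℕ∞) fun z : (EuclideanSpace ℝ (Fin m)) => Φ ((g : (EuclideanSpace ℝ (Fin m)) ≃ₗᵢ[ℝ] (EuclideanSpace ℝ (Fin m))) z) i :=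
      (hΦcd i).comp (g : (EuclideanSpace ℝ (Fin m)) ≃ₗᵢ[ℝ] (EuclideanSpace ℝ (Fin m))).contDiff
    exact (((Complex.reCLM.contDiff.comp hgz).sub contDiff_const).pow 2).add
      (((Complex.imCLM.contDiff.comp hgz).sub contDiff_const).pow 2)
  · -- invariance
    intro z g hg γ hγ
    have key : ∀ g₁ : G, Φ ((g₁ : (EuclideanSpace ℝ (Fin m)) ≃ₗᵢ[ℝ] (EuclideanSpace ℝ (Fin m))) ((g : (EuclideanSpace ℝ (Fin m)) ≃ₗᵢ[ℝ] (EuclideanSpace ℝ (Fin m))) z + γ))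
        = Φ (((g₁ * ⟨g, hg⟩ : G) : (EuclideanSpace ℝ (Fin m)) ≃ₗᵢ[ℝ] (EuclideanSpace ℝ (Fin m))) z) := by
      intro g₁
      have hmap : (g₁ : (EuclideanSpace ℝ (Fin m)) ≃ₗᵢ[ℝ] (EuclideanSpace ℝ (Fin m))) ((g : (EuclideanSpace ℝ (Fin m)) ≃ₗᵢ[ℝ] (EuclideanSpace ℝ (Fin m))) z + γ)
          = ((g₁ * ⟨g, hg⟩ : G) : (EuclideanSpace ℝ (Fin m)) ≃ₗᵢ[ℝ] (EuclideanSpace ℝ (Fin m))) z + (g₁ : (EuclideanSpace ℝ (Fin m)) ≃ₗᵢ[ℝ] (EuclideanSpace ℝ (Fin m))) γ := by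
        rw [map_add]
        congr 1
      rw [hmap]
      exact hΦper _ _ (hGΓ _ g₁.2 _ hγ)
    calc (∑ g₁ : G, ∏ g' : G,
          Q (Φ ((g₁ : (EuclideanSpace ℝ (Fin m)) ≃ₗᵢ[ℝ] (EuclideanSpace ℝ (Fin m))) ((g : (EuclideanSpace ℝ (Fin m)) ≃ₗᵢ[ℝ] (EuclideanSpace ℝ (Fin m))) z + γ))) (Φ ((g' : (EuclideanSpace ℝ (Fin m)) ≃ₗᵢ[ℝ] (EuclideanSpace ℝ (Fin m))) y)))
        = ∑ g₁ : G, ∏ g' : G,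
          Q (Φ (((g₁ * ⟨g, hg⟩ : G) : (EuclideanSpace ℝ (Fin m)) ≃ₗᵢ[ℝ] (EuclideanSpace ℝ (Fin m))) z)) (Φ ((g' : (EuclideanSpace ℝ (Fin m)) ≃ₗᵢ[ℝ] (EuclideanSpace ℝ (Fin m))) y)) := by
          refine Finset.sum_congr rfl fun g₁ _ => ?_
          rw [key g₁]
      _ = ∑ g₁ : G, ∏ g' : G,
          Q (Φ ((g₁ : (EuclideanSpace ℝ (Fin m)) ≃ₗᵢ[ℝ] (EuclideanSpace ℝ (Fin m))) z)) (Φ ((g' : (EuclideanSpace ℝ (Fin m)) ≃ₗᵢ[ℝ] (EuclideanSpace ℝ (Fin m))) y)) := by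
          exact Fintype.sum_equiv (Equiv.mulRight (⟨g, hg⟩ : G)) _ _ (fun g₁ => rfl)
  · -- separation
    have hfy : (∑ g : G, ∏ g' : G,
        Q (Φ ((g : (EuclideanSpace ℝ (Fin m)) ≃ₗᵢ[ℝ] (EuclideanSpace ℝ (Fin m))) y)) (Φ ((g' : (EuclideanSpace ℝ (Fin m)) ≃ₗᵢ[ℝ] (EuclideanSpace ℝ (Fin m))) y))) = 0 := by
      refine Finset.sum_eq_zero fun g _ => ?_
      exact Finset.prod_eq_zero (Finset.mem_univ g) (hQself _)
    have hΦxy : ∀ g' : G, Φ x ≠ Φ ((g' : (EuclideanSpace ℝ (Fin m)) ≃ₗᵢ[ℝ] (EuclideanSpace ℝ (Fin m))) y) := by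
      intro g' heq
      have hmem : x - (g' : (EuclideanSpace ℝ (Fin m)) ≃ₗᵢ[ℝ] (EuclideanSpace ℝ (Fin m))) y ∈ Γ := hΦinj _ _ heq
      set γ0 : (EuclideanSpace ℝ (Fin m)) := x - (g' : (EuclideanSpace ℝ (Fin m)) ≃ₗᵢ[ℝ] (EuclideanSpace ℝ (Fin m))) y with hγ0
      have hg'inv : ((g'⁻¹ : G) : (EuclideanSpace ℝ (Fin m)) ≃ₗᵢ[ℝ] (EuclideanSpace ℝ (Fin m))) ∈ G := (g'⁻¹ : G).2
      have hγmem : -(((g'⁻¹ : G) : (EuclideanSpace ℝ (Fin m)) ≃ₗᵢ[ℝ] (EuclideanSpace ℝ (Fin m))) γ0) ∈ Γ :=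
        Γ.neg_mem (hGΓ _ hg'inv _ hmem)
      apply hxy _ hg'inv _ hγmem
      have hco : ((g'⁻¹ : G) : (EuclideanSpace ℝ (Fin m)) ≃ₗᵢ[ℝ] (EuclideanSpace ℝ (Fin m))) = ((g' : (EuclideanSpace ℝ (Fin m)) ≃ₗᵢ[ℝ] (EuclideanSpace ℝ (Fin m))))⁻¹ := rfl
      rw [hco, ← sub_eq_add_neg, ← map_sub]
      have : x - γ0 = (g' : (EuclideanSpace ℝ (Fin m)) ≃ₗᵢ[ℝ] (EuclideanSpace ℝ (Fin m))) y := by rw [hγ0]; abel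
      rw [this]
      simp [LinearIsometryEquiv.coe_inv]
    have hfx : 0 < ∑ g : G, ∏ g' : G,
        Q (Φ ((g : (EuclideanSpace ℝ (Fin m)) ≃ₗᵢ[ℝ] (EuclideanSpace ℝ (Fin m))) x)) (Φ ((g' : (EuclideanSpace ℝ (Fin m)) ≃ₗᵢ[ℝ] (EuclideanSpace ℝ (Fin m))) y)) := by
      refine Finset.sum_pos' (fun g _ => Finset.prod_nonneg fun g' _ => hQnonneg _ _)
        ⟨1, Finset.mem_univ 1, ?_⟩
      refine Finset.prod_pos fun g' _ => ?_
      have h1 : ((1 : G) : (EuclideanSpace ℝ (Fin m)) ≃ₗᵢ[ℝ] (EuclideanSpace ℝ (Fin m))) x = x := by simp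
      rw [h1]
      exact hQpos _ _ (hΦxy g')
    simpa only [hfy] using ne_of_gt hfx
end

section
/- Let X be a set and let A be a ℂ-subalgebra of the algebra of all functions X → ℂ (with pointwise operations) that is closed under pointwise complex conjugation. Let p, q ≥ 0 and n = p + 2q, and suppose x_1, …, x_n ∈ A are algebraically independent over ℂ, generate A as a ℂ-algebra, and satisfy: the functions x_1, …, x_p are real-valued, and the pointwise complex conjugate of x_{p+i} equals x_{p+q+i} for each i = 1, …, q. Define real-valued functions y_1, …, y_n on X by y_i = x_i for 1 ≤ i ≤ p, y_{p+i} = Re(x_{p+i}) and y_{p+q+i} = Im(x_{p+i}) for 1 ≤ i ≤ q. Then y_1, …, y_n are algebraically independent over ℝ and they generate, as an ℝ-algebra, precisely the set of real-valued elements of A (i.e., {f ∈ A : f(x) ∈ ℝ for all x ∈ X}). -/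
open MvPolynomial

namespace RealGenAux

lemma fin_eq {n a b : ℕ} (ha : a < n) (hb : b < n) (h : a = b) :
    (⟨a, ha⟩ : Fin n) = ⟨b, hb⟩ := by subst h; rfl

noncomputable def Lp (p q : ℕ) (i : Fin (p + 2 * q)) : MvPolynomial (Fin (p + 2 * q)) ℂ :=
  if (i : ℕ) < p then X i
  else if h2 : (i : ℕ) < p + q then C (1/2 : ℂ) * (X i + X ⟨(i : ℕ) + q, by omega⟩)
  else C (-Complex.I/2) * (X ⟨(i : ℕ) - q, lt_of_le_of_lt (Nat.sub_le _ _) i.isLt⟩ - X i)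

noncomputable def Mp (p q : ℕ) (i : Fin (p + 2 * q)) : MvPolynomial (Fin (p + 2 * q)) ℂ :=
  if (i : ℕ) < p then X i
  else if h2 : (i : ℕ) < p + q then X i + C Complex.I * X ⟨(i : ℕ) + q, by omega⟩
  else X ⟨(i : ℕ) - q, lt_of_le_of_lt (Nat.sub_le _ _) i.isLt⟩ - C Complex.I * X i

lemma bind_ML (p q : ℕ) (i : Fin (p + 2 * q)) :
    bind₁ (Mp p q) (Lp p q i) = X i := by
  have hi := i.isLt
  have hC2 : (C (1/2 : ℂ) : MvPolynomial (Fin (p + 2*q)) ℂ) * 2 = 1 := by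
    rw [show (2 : MvPolynomial (Fin (p + 2*q)) ℂ) = C 2 from (map_ofNat _ 2).symm, ← map_mul]
    norm_num
  have hI : (C (-Complex.I/2 : ℂ) : MvPolynomial (Fin (p + 2*q)) ℂ) * (C Complex.I * 2) = 1 := by
    rw [show (2 : MvPolynomial (Fin (p + 2*q)) ℂ) = C 2 from (map_ofNat _ 2).symm,
      ← map_mul, ← map_mul]
    rw [show (-Complex.I/2) * (Complex.I * 2) = 1 from by linear_combination -Complex.I_mul_I]
    exact map_one C
  rcases lt_or_ge (i : ℕ) p with h1 | h1
  · rw [Lp, if_pos h1, bind₁_X_right, Mp, if_pos h1]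
  rcases lt_or_ge (i : ℕ) (p + q) with h2 | h2
  · rw [Lp, if_neg (by omega), dif_pos h2, map_mul, map_add, bind₁_X_right, bind₁_X_right,
      bind₁_C_right]
    rw [show Mp p q ⟨(i:ℕ)+q, by omega⟩
        = X ⟨(i:ℕ)+q-q, by omega⟩ - C Complex.I * X ⟨(i:ℕ)+q, by omega⟩ from by
      rw [Mp, if_neg (by simp only [Fin.val_mk]; omega),
        dif_neg (by simp only [Fin.val_mk]; omega)]]
    rw [fin_eq (by omega) i.isLt (by omega : (i:ℕ)+q-q = (i:ℕ)), Fin.eta]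
    rw [Mp, if_neg (by omega), dif_pos h2]
    linear_combination X i * hC2
  · rw [Lp, if_neg (by omega), dif_neg (by omega), map_mul, map_sub, bind₁_X_right,
      bind₁_X_right, bind₁_C_right]
    rw [show Mp p q ⟨(i:ℕ)-q, lt_of_le_of_lt (Nat.sub_le _ _) i.isLt⟩
        = X ⟨(i:ℕ)-q, lt_of_le_of_lt (Nat.sub_le _ _) i.isLt⟩
          + C Complex.I * X ⟨(i:ℕ)-q+q, by omega⟩ from by
      rw [Mp, if_neg (by simp only [Fin.val_mk]; omega),
        dif_pos (by simp only [Fin.val_mk]; omega)]]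
    rw [fin_eq (by omega) i.isLt (by omega : (i:ℕ)-q+q = (i:ℕ)), Fin.eta]
    rw [Mp, if_neg (by omega), dif_neg (by omega)]
    linear_combination X i * hI

def realValued (X : Type*) : Subalgebra ℝ (X → ℂ) where
  carrier := {f | ∀ t, (f t).im = 0}
  mul_mem' := fun {a b} ha hb t => by
    simp [Pi.mul_apply, Complex.mul_im, ha t, hb t]
  add_mem' := fun {a b} ha hb t => by simp [ha t, hb t]
  algebraMap_mem' := fun r t => by simp [Pi.algebraMap_apply]

def decompSub (X : Type*) (B : Subalgebra ℝ (X → ℂ)) : Subalgebra ℂ (X → ℂ) where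
  carrier := {f | ∃ g ∈ B, ∃ h ∈ B, ∀ t, f t = g t + Complex.I * h t}
  mul_mem' := by
    rintro a b ⟨g1, hg1, h1, hh1, e1⟩ ⟨g2, hg2, h2, hh2, e2⟩
    refine ⟨g1*g2 - h1*h2, sub_mem (mul_mem hg1 hg2) (mul_mem hh1 hh2),
      g1*h2 + h1*g2, add_mem (mul_mem hg1 hh2) (mul_mem hh1 hg2), fun t => ?_⟩
    simp only [Pi.mul_apply, Pi.sub_apply, Pi.add_apply, e1 t, e2 t]
    linear_combination (h1 t * h2 t) * Complex.I_mul_I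
  add_mem' := by
    rintro a b ⟨g1, hg1, h1, hh1, e1⟩ ⟨g2, hg2, h2, hh2, e2⟩
    refine ⟨g1 + g2, add_mem hg1 hg2, h1 + h2, add_mem hh1 hh2, fun t => ?_⟩
    simp only [Pi.add_apply, e1 t, e2 t]; ring
  algebraMap_mem' := by
    intro c
    refine ⟨algebraMap ℝ _ c.re, (B.algebraMap_mem _), algebraMap ℝ _ c.im,
      (B.algebraMap_mem _), fun t => ?_⟩
    simp only [Pi.algebraMap_apply]
    simp [Algebra.algebraMap_self]
    rw [mul_comm]
    exact (Complex.re_add_im c).symm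

end RealGenAux

set_option maxHeartbeats 1000000 in
open RealGenAux in
/-- If a conjugation-stable `ℂ`-subalgebra `A` of functions `X → ℂ` is freely generated by
algebraically independent elements `x_1, …, x_n` (`n = p + 2q`) with `x_1, …, x_p`
real-valued and `conj x_{p+i} = x_{p+q+i}` for `1 ≤ i ≤ q`, then the real functions
`y_i = x_i` (`i ≤ p`), `y_{p+i} = Re x_{p+i}`, `y_{p+q+i} = Im x_{p+i}` are algebraically
independent over `ℝ` and generate, as an `ℝ`-algebra, exactly the real-valued elements
of `A`. -/
theorem real_generators_of_conjugation_stable_free_algebra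
    (X : Type*) (A : Subalgebra ℂ (X → ℂ))
    (hconj : ∀ f ∈ A, (fun t => (starRingEnd ℂ) (f t)) ∈ A)
    (p q : ℕ)
    (x : Fin (p + 2 * q) → (X → ℂ))
    (hxA : ∀ i, x i ∈ A)
    (hind : AlgebraicIndependent ℂ x)
    (hgen : Algebra.adjoin ℂ (Set.range x) = A)
    (hreal : ∀ i : Fin (p + 2 * q), (i : ℕ) < p → ∀ t, (x i t).im = 0)
    (hpair : ∀ (i : ℕ) (hi : i < q), ∀ t,
      (starRingEnd ℂ) (x ⟨p + i, by omega⟩ t) = x ⟨p + q + i, by omega⟩ t) :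
    ∃ y : Fin (p + 2 * q) → (X → ℝ),
      (∀ i : Fin (p + 2 * q), (i : ℕ) < p + q → ∀ t, y i t = (x i t).re) ∧
      (∀ (i : ℕ) (hi : i < q), ∀ t,
        y ⟨p + q + i, by omega⟩ t = (x ⟨p + i, by omega⟩ t).im) ∧
      AlgebraicIndependent ℝ y ∧
      (∀ f : X → ℂ,
        f ∈ Algebra.adjoin ℝ (Set.range (fun i => fun t => ((y i t : ℝ) : ℂ))) ↔
          f ∈ A ∧ ∀ t, (f t).im = 0) := by
  classical
  set Y : Fin (p + 2 * q) → X → ℝ := fun i =>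
    if h : (i : ℕ) < p + q then fun t => (x i t).re
    else fun t => (x ⟨(i : ℕ) - q, lt_of_le_of_lt (Nat.sub_le _ _) i.isLt⟩ t).im with hY
  set Z : Fin (p + 2 * q) → X → ℂ := fun i => fun t => ((Y i t : ℝ) : ℂ) with hZ
  have xc : ∀ {a b : Fin (p + 2 * q)}, (a : ℕ) = (b : ℕ) → ∀ t, x a t = x b t :=
    fun h t => by rw [Fin.val_injective h]
  have hxconj : ∀ i : Fin (p + 2 * q), ∀ (h1 : p ≤ (i : ℕ)) (h2 : (i : ℕ) < p + q), ∀ t,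
      x ⟨(i : ℕ) + q, by omega⟩ t = (starRingEnd ℂ) (x i t) := by
    intro i hpi hiq t
    have h := (hpair ((i : ℕ) - p) (by omega) t).symm
    rw [xc (a := ⟨(i:ℕ) + q, by omega⟩) (b := ⟨p + q + ((i:ℕ) - p), by omega⟩)
      (by simp only [Fin.val_mk]; omega) t, h,
      xc (a := ⟨p + ((i:ℕ) - p), by omega⟩) (b := i) (by simp only [Fin.val_mk]; omega) t]
  have hY1 : ∀ i : Fin (p + 2 * q), (i : ℕ) < p + q → ∀ t, Y i t = (x i t).re := by
    intro i hi t; simp only [hY]; rw [dif_pos hi]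
  have hY2 : ∀ i : Fin (p + 2 * q), ∀ (h : p + q ≤ (i : ℕ)), ∀ t,
      Y i t = (x ⟨(i : ℕ) - q, lt_of_le_of_lt (Nat.sub_le _ _) i.isLt⟩ t).im := by
    intro i hi t; simp only [hY]; rw [dif_neg (by omega)]
  -- Z in terms of x
  have hZx : ∀ i, Z i = (aeval x) (Lp p q i) := by
    intro i
    have hi := i.isLt
    funext t
    rcases lt_or_ge (i : ℕ) p with h1 | h1
    · rw [Lp, if_pos h1]
      simp only [hZ, aeval_X]
      rw [hY1 i (by omega) t]
      exact (Complex.ext (by simp) (by simp [hreal i h1 t])).symm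
    rcases lt_or_ge (i : ℕ) (p + q) with h2 | h2
    · rw [Lp, if_neg (by omega), dif_pos h2]
      simp only [hZ, map_mul, map_add, aeval_X, aeval_C, Pi.mul_apply, Pi.add_apply,
        Pi.algebraMap_apply, Algebra.algebraMap_self, RingHom.id_apply]
      rw [hY1 i h2 t, hxconj i h1 h2 t, Complex.add_conj]
      push_cast
      ring
    · rw [Lp, if_neg (by omega), dif_neg (by omega)]
      simp only [hZ, map_mul, map_sub, aeval_X, aeval_C, Pi.mul_apply, Pi.sub_apply,
        Pi.algebraMap_apply, Algebra.algebraMap_self, RingHom.id_apply]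
      rw [hY2 i h2 t]
      have e1 : x i t = (starRingEnd ℂ) (x ⟨(i : ℕ) - q,
          lt_of_le_of_lt (Nat.sub_le _ _) i.isLt⟩ t) := by
        rw [← hxconj ⟨(i : ℕ) - q, lt_of_le_of_lt (Nat.sub_le _ _) i.isLt⟩
          (by simp only [Fin.val_mk]; omega) (by simp only [Fin.val_mk]; omega) t]
        exact xc (by simp only [Fin.val_mk]; omega) t
      rw [e1, Complex.sub_conj]
      push_cast
      linear_combination (((x ⟨(i : ℕ) - q, lt_of_le_of_lt (Nat.sub_le _ _) i.isLt⟩ t).im : ℂ))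
        * Complex.I_mul_I
  -- x in terms of Z
  have hxZ : ∀ i, x i = (aeval Z) (Mp p q i) := by
    intro i
    have hi := i.isLt
    funext t
    rcases lt_or_ge (i : ℕ) p with h1 | h1
    · rw [Mp, if_pos h1]
      simp only [hZ, aeval_X]
      rw [hY1 i (by omega) t]
      exact Complex.ext (by simp) (by simp [hreal i h1 t])
    rcases lt_or_ge (i : ℕ) (p + q) with h2 | h2
    · rw [Mp, if_neg (by omega), dif_pos h2]
      simp only [hZ, map_mul, map_add, aeval_X, aeval_C, Pi.mul_apply, Pi.add_apply,
        Pi.algebraMap_apply, Algebra.algebraMap_self, RingHom.id_apply]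
      rw [hY1 i h2 t, hY2 ⟨(i:ℕ) + q, by omega⟩ (by simp only [Fin.val_mk]; omega) t,
        show ((x ⟨(((⟨(i:ℕ) + q, by omega⟩ : Fin (p + 2*q)) : ℕ)) - q,
          lt_of_le_of_lt (Nat.sub_le _ _) (⟨(i:ℕ) + q, by omega⟩ : Fin (p + 2*q)).isLt⟩ t))
          = x i t from xc (by simp only [Fin.val_mk]; omega) t]
      rw [mul_comm Complex.I]
      exact (Complex.re_add_im (x i t)).symm
    · rw [Mp, if_neg (by omega), dif_neg (by omega)]
      simp only [hZ, map_mul, map_sub, aeval_X, aeval_C, Pi.mul_apply, Pi.sub_apply,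
        Pi.algebraMap_apply, Algebra.algebraMap_self, RingHom.id_apply]
      set j : Fin (p + 2 * q) := ⟨(i : ℕ) - q, lt_of_le_of_lt (Nat.sub_le _ _) i.isLt⟩ with hj
      have e1 : x i t = (starRingEnd ℂ) (x j t) := by
        rw [← hxconj j (by simp only [hj, Fin.val_mk]; omega)
          (by simp only [hj, Fin.val_mk]; omega) t]
        exact xc (by simp only [hj, Fin.val_mk]; omega) t
      rw [hY1 j (by simp only [hj, Fin.val_mk]; omega) t, hY2 i h2 t, ← hj, e1]
      exact Complex.ext (by simp) (by simp)
  -- algebraic independence of Z over ℂ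
  have hZind : AlgebraicIndependent ℂ Z := by
    rw [algebraicIndependent_iff]
    intro P hP
    have h1 : (aeval x) (bind₁ (Lp p q) P) = 0 := by
      rw [aeval_bind₁, show (fun i => (aeval x) (Lp p q i)) = Z from
        funext fun i => (hZx i).symm]
      exact hP
    have h2 : bind₁ (Lp p q) P = 0 := hind.eq_zero_of_aeval_eq_zero _ h1
    have h3 : bind₁ (Mp p q) (bind₁ (Lp p q) P) = 0 := by rw [h2]; exact map_zero _
    rw [bind₁_bind₁] at h3
    simpa [bind_ML, bind₁_X_left] using h3
  -- membership of Z in A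
  have hZA : ∀ i, Z i ∈ A := by
    intro i
    rw [hZx i, ← hgen, Algebra.adjoin_range_eq_range_aeval]
    exact ⟨Lp p q i, rfl⟩
  have hAZ : Algebra.adjoin ℂ (Set.range Z) = A := by
    apply le_antisymm
    · exact Algebra.adjoin_le (by rintro _ ⟨i, rfl⟩; exact hZA i)
    · rw [← hgen]
      apply Algebra.adjoin_le
      rintro _ ⟨i, rfl⟩
      rw [hxZ i]
      have : Z '' Set.univ ⊆ (Algebra.adjoin ℂ (Set.range Z) : Set (X → ℂ)) := by
        rintro _ ⟨i, _, rfl⟩; exact Algebra.subset_adjoin ⟨i, rfl⟩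
      rw [Algebra.adjoin_range_eq_range_aeval]
      exact ⟨Mp p q i, rfl⟩
  set B : Subalgebra ℝ (X → ℂ) := Algebra.adjoin ℝ (Set.range Z) with hB
  have hBreal : ∀ f ∈ B, ∀ t, (f t).im = 0 := by
    intro f hf
    have hle : B ≤ realValued X := Algebra.adjoin_le (by
      rintro _ ⟨i, rfl⟩ t
      simp [hZ])
    exact hle hf
  have hBA : ∀ f ∈ B, f ∈ A := by
    intro f hf
    have hle : B ≤ Subalgebra.restrictScalars ℝ A := Algebra.adjoin_le (by
      rintro _ ⟨i, rfl⟩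
      exact hZA i)
    exact hle hf
  have hdecomp : ∀ f ∈ A, ∃ g ∈ B, ∃ h ∈ B, ∀ t, f t = g t + Complex.I * h t := by
    intro f hf
    have hle : Algebra.adjoin ℂ (Set.range Z) ≤ decompSub X B := by
      apply Algebra.adjoin_le
      rintro _ ⟨i, rfl⟩
      exact ⟨Z i, Algebra.subset_adjoin ⟨i, rfl⟩, 0, zero_mem _, fun t => by simp⟩
    have : f ∈ Algebra.adjoin ℂ (Set.range Z) := by rw [hAZ]; exact hf
    exact hle this
  -- algebraic independence of Y over ℝ
  have hYind : AlgebraicIndependent ℝ Y := by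
    have hZR : AlgebraicIndependent ℝ Z :=
      hZind.restrictScalars (fun a b h => Complex.ofReal_injective h)
    refine AlgebraicIndependent.of_comp (AlgHom.compLeft Complex.ofRealAm X) ?_
    have : (⇑(AlgHom.compLeft Complex.ofRealAm X)) ∘ Y = Z := rfl
    rw [this]
    exact hZR
  refine ⟨Y, hY1, ?_, hYind, ?_⟩
  · intro i hi t
    rw [hY2 ⟨p + q + i, by omega⟩ (by simp only [Fin.val_mk]; omega) t]
    congr 1
    exact xc (by simp only [Fin.val_mk]; omega) t
  · intro f
    rw [show (fun i => fun t => ((Y i t : ℝ) : ℂ)) = Z from hZ.symm]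
    constructor
    · intro hf
      exact ⟨hBA f hf, hBreal f hf⟩
    · rintro ⟨hfA, hfim⟩
      obtain ⟨g, hg, h, hh, e⟩ := hdecomp f hfA
      have hh0 : ∀ t, h t = 0 := by
        intro t
        have h1 : (f t).im = (h t).re := by
          rw [e t]
          simp [Complex.add_im, Complex.mul_im, hBreal g hg t, hBreal h hh t]
        refine Complex.ext ?_ (hBreal h hh t)
        rw [← h1, hfim t, Complex.zero_re]
      have hfg : f = g := funext fun t => by rw [e t, hh0 t]; simp
      rw [hfg]
      exact hg
end

section
/- Let Γ be a full-rank lattice in ℝ^m and let G be a finite group of linear isometries of ℝ^m with g(Γ) = Γ for every g ∈ G; let W̃ denote the group of affine transformations x ↦ g x + γ with g ∈ G, γ ∈ Γ. If x, y ∈ ℝ^m lie in different W̃-orbits (y ≠ g x + γ for all g ∈ G, γ ∈ Γ), then there exist finitely many functionals ℓ_1, …, ℓ_k in the dual lattice Γ* and complex numbers c_1, …, c_k such that the trigonometric polynomial p(z) = Σ_{j=1}^k c_j exp(2πi ℓ_j(z)) satisfies p(g z + γ) = p(z) for all z ∈ ℝ^m, g ∈ G, γ ∈ Γ, and p(x)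 ≠ p(y). That is, the W̃-invariant trigonometric polynomials associated to Γ separate the W̃-orbits in ℝ^m. -/
open scoped Real BigOperators

/-!
Because `x - g y ∉ Γ` for each `g ∈ G`, some coordinate functional `ℓ` of a `ℤ`-basis of `Γ`
(an element of the dual lattice) is not an integer at `x - g y`, so the character
`e^{2πiℓ}` separates `x` from `g y`. The product over `g` of `|e^{2πiℓ_g} - e^{2πiℓ_g(g y)}|²` is
a nonnegative trigonometric polynomial vanishing on the orbit `G y` but not at `x`; it is
automatically `Γ`-periodic, and its average over `G` is the required invariant polynomial.
-/

def linearIsometryRepresentation {R E : Type*} [CommSemiring R] [SeminormedAddCommGroup E]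
    [Module R E] (G : Subgroup (E ≃ₗᵢ[R] E)) : Representation R G E where
  toFun g := (g : E ≃ₗᵢ[R] E).toLinearEquiv.toLinearMap
  map_one' := rfl
  map_mul' _ _ := rfl

namespace TrigPolynomial

section Module

variable {E : Type*} [AddCommGroup E] [Module ℝ E]

def dualLattice (Γ : AddSubgroup E) : AddSubgroup (E →ₗ[ℝ] ℝ) where
  carrier := {ℓ | ∀ γ ∈ Γ, ∃ n : ℤ, ℓ γ = n}
  add_mem' {ℓ ℓ'} hℓ hℓ' γ hγ := by
    obtain ⟨n, hn⟩ := hℓ γ hγ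
    obtain ⟨n', hn'⟩ := hℓ' γ hγ
    exact ⟨n + n', by simp [hn, hn']⟩
  zero_mem' _ _ := ⟨0, by simp⟩
  neg_mem' {ℓ} hℓ γ hγ := by
    obtain ⟨n, hn⟩ := hℓ γ hγ
    exact ⟨-n, by simp [hn]⟩

noncomputable def character (ℓ : E →ₗ[ℝ] ℝ) (z : E) : ℂ :=
  Complex.exp (2 * π * Complex.I * ℓ z)

theorem character_zero : character (0 : E →ₗ[ℝ] ℝ) = 1 := by
  ext z; simp [character]

theorem character_add (ℓ ℓ' : E →ₗ[ℝ] ℝ) : character (ℓ + ℓ') = character ℓ * character ℓ' := by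
  ext z; simp [character, mul_add, Complex.exp_add]

theorem character_neg_apply (ℓ : E →ₗ[ℝ] ℝ) (z : E) :
    character (-ℓ) z = starRingEnd ℂ (character ℓ z) := by
  simp [character, ← Complex.exp_conj, map_ofNat]

theorem character_apply_eq_iff {ℓ : E →ₗ[ℝ] ℝ} {z w : E} :
    character ℓ z = character ℓ w ↔ ∃ n : ℤ, ℓ (z - w) = n := by
  have h2πi : 2 * π * Complex.I ≠ 0 := by simp [Real.pi_ne_zero]
  rw [character, character, Complex.exp_eq_exp_iff_exists_int]
  refine exists_congr fun n => ?_
  rw [show 2 * π * Complex.I * ℓ w + n * (2 * π * Complex.I) = 2 * π * Complex.I * (ℓ w + n) by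
    ring, mul_right_inj' h2πi, map_sub, sub_eq_iff_eq_add']
  norm_cast

theorem character_apply_add {Γ : AddSubgroup E} {ℓ : E →ₗ[ℝ] ℝ} (hℓ : ℓ ∈ dualLattice Γ)
    (z : E) {γ : E} (hγ : γ ∈ Γ) : character ℓ (z + γ) = character ℓ z :=
  character_apply_eq_iff.mpr (by simpa using hℓ γ hγ)

noncomputable def trigPolynomials (Γ : AddSubgroup E) : Subalgebra ℂ (E → ℂ) :=
  Algebra.adjoin ℂ (character '' (dualLattice Γ : Set (E →ₗ[ℝ] ℝ)))

variable {Γ : AddSubgroup E}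

theorem character_mem_trigPolynomials {ℓ : E →ₗ[ℝ] ℝ} (hℓ : ℓ ∈ dualLattice Γ) :
    character ℓ ∈ trigPolynomials Γ :=
  Algebra.subset_adjoin ⟨ℓ, hℓ, rfl⟩

theorem toSubmodule_trigPolynomials :
    Subalgebra.toSubmodule (trigPolynomials Γ) =
      Submodule.span ℂ (character '' (dualLattice Γ : Set (E →ₗ[ℝ] ℝ))) := by
  let characters : Submonoid (E → ℂ) :=
    { carrier := character '' (dualLattice Γ : Set (E →ₗ[ℝ] ℝ))
      mul_mem' := by
        rintro _ _ ⟨ℓ, hℓ, rfl⟩ ⟨ℓ', hℓ', rfl⟩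
        exact ⟨ℓ + ℓ', add_mem hℓ hℓ', character_add ℓ ℓ'⟩
      one_mem' := ⟨0, zero_mem _, character_zero⟩ }
  rw [trigPolynomials, Algebra.adjoin_eq_span]
  exact congrArg (Submodule.span ℂ ∘ SetLike.coe) (Submonoid.closure_eq characters)

theorem exists_eq_sum_character {p : E → ℂ} (hp : p ∈ trigPolynomials Γ) :
    ∃ (k : ℕ) (ℓ : Fin k → E →ₗ[ℝ] ℝ) (c : Fin k → ℂ), (∀ j, ℓ j ∈ dualLattice Γ) ∧
      p = fun z => ∑ j, c j * character (ℓ j) z := by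
  rw [← Subalgebra.mem_toSubmodule, toSubmodule_trigPolynomials, Submodule.mem_span_set'] at hp
  obtain ⟨k, c, χ, rfl⟩ := hp
  choose ℓ hℓ hχ using fun j => (χ j).2
  refine ⟨k, ℓ, c, hℓ, funext fun z => ?_⟩
  simp [hχ]

theorem apply_add_of_mem_trigPolynomials {p : E → ℂ} (hp : p ∈ trigPolynomials Γ) (z : E)
    {γ : E} (hγ : γ ∈ Γ) : p (z + γ) = p z := by
  induction hp using Algebra.adjoin_induction with
  | mem _ hχ =>
    obtain ⟨ℓ, hℓ, rfl⟩ := hχ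
    exact character_apply_add hℓ z hγ
  | algebraMap c => rfl
  | add p q _ _ hp hq => simp [hp, hq]
  | mul p q _ _ hp hq => simp [hp, hq]

theorem comp_mem_trigPolynomials {p : E → ℂ} (hp : p ∈ trigPolynomials Γ) {g : E →ₗ[ℝ] E}
    (hg : ∀ γ ∈ Γ, g γ ∈ Γ) : p ∘ g ∈ trigPolynomials Γ := by
  induction hp using Algebra.adjoin_induction with
  | mem _ hχ =>
    obtain ⟨ℓ, hℓ, rfl⟩ := hχ
    exact character_mem_trigPolynomials (ℓ := ℓ ∘ₗ g) fun γ hγ => hℓ (g γ) (hg γ hγ)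
  | algebraMap c => exact algebraMap_mem _ c
  | add p q _ _ hp hq => exact add_mem hp hq
  | mul p q _ _ hp hq => exact mul_mem hp hq

theorem normSq_sub_character_mem_trigPolynomials {ℓ : E →ₗ[ℝ] ℝ} (hℓ : ℓ ∈ dualLattice Γ)
    (a : ℂ) : (fun z => (Complex.normSq (character ℓ z - a) : ℂ)) ∈ trigPolynomials Γ := by
  have hmem : (character ℓ - algebraMap ℂ _ a) * (character (-ℓ) - algebraMap ℂ _ (starRingEnd ℂ a))
      ∈ trigPolynomials Γ :=
    mul_mem (sub_mem (character_mem_trigPolynomials hℓ) (algebraMap_mem _ a))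
      (sub_mem (character_mem_trigPolynomials (neg_mem hℓ)) (algebraMap_mem _ _))
  convert hmem using 1
  ext z
  simp [character_neg_apply, ← map_sub, Complex.mul_conj]

open ComplexOrder in
theorem exists_nonneg_mem_trigPolynomials_vanishing {ι : Type*} [Fintype ι] {w : ι → E} {x : E}
    (hsep : ∀ i, ∃ ℓ ∈ dualLattice Γ, ∀ n : ℤ, ℓ (x - w i) ≠ n) :
    ∃ q ∈ trigPolynomials Γ, (∀ z, 0 ≤ q z) ∧ (∀ i, q (w i) = 0) ∧ q x ≠ 0 := by
  choose ℓ hℓ hℓx using hsep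
  refine ⟨∏ i, fun z => (Complex.normSq (character (ℓ i) z - character (ℓ i) (w i)) : ℂ),
    Subalgebra.prod_mem _ fun i _ => normSq_sub_character_mem_trigPolynomials (hℓ i) _,
    fun z => ?_, fun i => ?_, ?_⟩
  · rw [Finset.prod_apply]
    exact Finset.prod_nonneg fun i _ => by exact_mod_cast Complex.normSq_nonneg _
  · rw [Finset.prod_apply]
    exact Finset.prod_eq_zero (Finset.mem_univ i) (by simp)
  · rw [Finset.prod_apply, Finset.prod_ne_zero_iff]
    intro i _
    rw [Complex.ofReal_ne_zero, Complex.normSq_eq_zero.ne, sub_ne_zero]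
    exact fun h => (character_apply_eq_iff.mp h).elim (hℓx i)

end Module

section Lattice

variable {E : Type*} [NormedAddCommGroup E] [NormedSpace ℝ E] [FiniteDimensional ℝ E]
  {Γ : AddSubgroup E} [DiscreteTopology Γ]

theorem exists_mem_dualLattice_apply_ne_intCast
    (hspan : Submodule.span ℝ (Γ : Set E) = ⊤) {v : E} (hv : v ∉ Γ) :
    ∃ ℓ ∈ dualLattice Γ, ∀ n : ℤ, ℓ v ≠ n := by
  let L := Γ.toIntSubmodule
  have : DiscreteTopology L := ‹DiscreteTopology Γ›
  have : IsZLattice ℝ L := ⟨hspan⟩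
  let B := (Module.Free.chooseBasis ℤ L).ofZLatticeBasis ℝ L
  have hmem (u : E) : u ∈ Γ ↔ ∀ i, B.repr u i ∈ Set.range (algebraMap ℤ ℝ) := by
    rw [← B.mem_span_iff_repr_mem ℤ, Module.Basis.ofZLatticeBasis_span]
    rfl
  obtain ⟨i, hi⟩ := not_forall.mp (mt (hmem v).mpr hv)
  refine ⟨B.coord i, fun γ hγ => ?_, fun n hn => hi ⟨n, by simpa using hn.symm⟩⟩
  obtain ⟨n, hn⟩ := (hmem γ).mp hγ i
  exact ⟨n, by simpa using hn.symm⟩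

theorem exists_invariant_mem_trigPolynomials_ne (hspan : Submodule.span ℝ (Γ : Set E) = ⊤)
    {G : Type*} [Group G] [Finite G] (ρ : Representation ℝ G E) (hρ : ∀ g, ∀ γ ∈ Γ, ρ g γ ∈ Γ)
    {x y : E} (hxy : ∀ g, ∀ γ ∈ Γ, ρ g x + γ ≠ y) :
    ∃ p ∈ trigPolynomials Γ, (∀ g z, p (ρ g z) = p z) ∧ p x ≠ p y := by
  have : Fintype G := Fintype.ofFinite G
  have hnot (g : G) : x - ρ g y ∉ Γ := by
    intro hγ
    refine hxy g⁻¹ _ (neg_mem (hρ g⁻¹ _ hγ)) ?_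
    rw [map_sub, ← Module.End.mul_apply, ← map_mul, inv_mul_cancel, map_one]
    simp
  obtain ⟨q, hqT, hq0, hqy, hqx⟩ := exists_nonneg_mem_trigPolynomials_vanishing
    fun g => exists_mem_dualLattice_apply_ne_intCast hspan (hnot g)
  refine ⟨∑ g, q ∘ ρ g, Subalgebra.sum_mem _ fun g _ => comp_mem_trigPolynomials hqT (hρ g),
    fun g z => ?_, ?_⟩
  · simp only [Finset.sum_apply, Function.comp_apply]
    exact Fintype.sum_equiv (Equiv.mulRight g) _ _ fun h => by simp
  · simp only [Finset.sum_apply, Function.comp_apply, Finset.sum_eq_zero fun g _ => hqy g]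
    open ComplexOrder in
    rw [Ne, Finset.sum_eq_zero_iff_of_nonneg fun g _ => hq0 _]
    exact fun h => hqx (by simpa using h 1 (Finset.mem_univ 1))

end Lattice

end TrigPolynomial

open TrigPolynomial

/-- The `W̃`-invariant trigonometric polynomials associated to a full-rank lattice `Γ`
(where `W̃` is the affine group of maps `z ↦ g z + γ`, `g` in a finite group `G` of linear
isometries preserving `Γ`, `γ ∈ Γ`) separate the `W̃`-orbits in `ℝ^m`. -/
theorem invariant_trig_polynomials_separate_affine_orbits
    (m : ℕ) (Γ : AddSubgroup (EuclideanSpace ℝ (Fin m)))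
    (hdisc : ∃ ε > 0, ∀ γ ∈ Γ, γ ≠ 0 → ε ≤ ‖γ‖)
    (hspan : Submodule.span ℝ (Γ : Set (EuclideanSpace ℝ (Fin m))) = ⊤)
    (G : Subgroup (EuclideanSpace ℝ (Fin m) ≃ₗᵢ[ℝ] EuclideanSpace ℝ (Fin m)))
    (hGfin : Finite G)
    (hGΓ : ∀ g ∈ G, ∀ γ ∈ Γ, g γ ∈ Γ)
    (x y : EuclideanSpace ℝ (Fin m))
    (hxy : ∀ g ∈ G, ∀ γ ∈ Γ, g x + γ ≠ y) :
    ∃ (k : ℕ) (ℓ : Fin k → (EuclideanSpace ℝ (Fin m) →ₗ[ℝ] ℝ)) (c : Fin k → ℂ)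
      (p : EuclideanSpace ℝ (Fin m) → ℂ),
      (∀ j, ∀ γ ∈ Γ, ∃ n : ℤ, ℓ j γ = n) ∧
      (p = fun z => ∑ j, c j * Complex.exp (2 * π * Complex.I * (ℓ j z))) ∧
      (∀ z : EuclideanSpace ℝ (Fin m), ∀ g ∈ G, ∀ γ ∈ Γ, p (g z + γ) = p z) ∧
      p x ≠ p y := by
  obtain ⟨ε, hε, hεΓ⟩ := hdisc
  have : DiscreteTopology Γ :=
    .of_forall_le_norm hε fun γ hγ => hεΓ γ γ.2 (by exact_mod_cast hγ)
  obtain ⟨p, hpT, hpG, hpxy⟩ := exists_invariant_mem_trigPolynomials_ne hspan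
    (linearIsometryRepresentation G) (fun g => hGΓ g g.2) (fun g => hxy g g.2)
  obtain ⟨k, ℓ, c, hℓ, hp⟩ := exists_eq_sum_character hpT
  exact ⟨k, ℓ, c, p, hℓ, hp, fun z g hg γ hγ =>
    (apply_add_of_mem_trigPolynomials hpT _ hγ).trans (hpG ⟨g, hg⟩ z), hpxy⟩
end
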